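/- Let P be a complex n×n matrix with -1 not an eigenvalue of P. Then P is positive semidefinite (i.e., P + P* is Hermitian positive semidefinite) if and only if ‖(I+P)^{-1}(I-P)‖ ≤ 1, where ‖·‖ is the spectral norm. -/

import Mathlib

open Matrix ComplexOrder

noncomputable def specNorm {n : ℕ} (M : Matrix (Fin n) (Fin n) ℂ) : ℝ :=
  ‖Matrix.toEuclideanCLM (𝕜 := ℂ) M‖

noncomputable def evnorm {n : ℕ} (x : Fin n → ℂ) : ℝ :=
  ‖(WithLp.equiv 2 (Fin n → ℂ)).symm x‖

/-- `P` is positive semidefinite in the (possibly non-Hermitian) sense: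
`Re (x* P x) ≥ 0` for all `x`. -/
def IsPSD {n : ℕ} (P : Matrix (Fin n) (Fin n) ℂ) : Prop :=
  ∀ x : Fin n → ℂ, 0 ≤ (star x ⬝ᵥ P *ᵥ x).re

/-- `P` is positive definite in the (possibly non-Hermitian) sense:
`Re (x* P x) > 0` for all nonzero `x`. -/
def IsPD {n : ℕ} (P : Matrix (Fin n) (Fin n) ℂ) : Prop :=
  ∀ x : Fin n → ℂ, x ≠ 0 → 0 < (star x ⬝ᵥ P *ᵥ x).re

/-- The positive semidefinite square root, as `Matrix.PosSemidef.sqrt` was defined in the older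
Mathlib (removed since). -/
noncomputable def Matrix.PosSemidef.sqrt {n : ℕ} {A : Matrix (Fin n) (Fin n) ℂ} (hA : A.PosSemidef) :
    Matrix (Fin n) (Fin n) ℂ :=
  hA.1.eigenvectorUnitary.1 * diagonal ((↑) ∘ (√·) ∘ hA.1.eigenvalues) *
  (star hA.1.eigenvectorUnitary : Matrix (Fin n) (Fin n) ℂ)

/-- `Σ^{-1/2} P Σ^{-1/2}` where `Σ^{1/2}` is the HPD square root of the HPD matrix `Sg`. -/
noncomputable def tild {n : ℕ} (Sg P : Matrix (Fin n) (Fin n) ℂ) (hS : Sg.PosDef) :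
    Matrix (Fin n) (Fin n) ℂ :=
  (hS.posSemidef.sqrt)⁻¹ * P * (hS.posSemidef.sqrt)⁻¹

/-- Key polarization identity: `‖(1+P)u‖² = ‖(1-P)u‖² + 4 Re(u* P u)`. -/
theorem keyid' {n : ℕ} (P : Matrix (Fin n) (Fin n) ℂ) (u : Fin n → ℂ) :
    ‖(WithLp.equiv 2 (Fin n → ℂ)).symm ((1 + P) *ᵥ u)‖ ^ 2 =
      ‖(WithLp.equiv 2 (Fin n → ℂ)).symm ((1 - P) *ᵥ u)‖ ^ 2
        + 4 * (star u ⬝ᵥ P *ᵥ u).re := by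
  set e := (WithLp.equiv 2 (Fin n → ℂ)).symm
  have h1 : e ((1 + P) *ᵥ u) = e u + e (P *ᵥ u) := by
    simp [e, add_mulVec, one_mulVec, WithLp.equiv_symm_apply, WithLp.toLp_add]
  have h2 : e ((1 - P) *ᵥ u) = e u - e (P *ᵥ u) := by
    simp [e, sub_mulVec, one_mulVec, WithLp.equiv_symm_apply, WithLp.toLp_sub]
  have hin : RCLike.re (inner (𝕜 := ℂ) (e u) (e (P *ᵥ u))) = (star u ⬝ᵥ P *ᵥ u).re := by
    rw [dotProduct_comm]; rfl
  rw [h1, h2, norm_add_sq (𝕜 := ℂ), norm_sub_sq (𝕜 := ℂ), hin]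
  ring

theorem stmt2 {n : ℕ} (P : Matrix (Fin n) (Fin n) ℂ) (h : (-1 : ℂ) ∉ spectrum ℂ P) :
    IsPSD P ↔ specNorm ((1 + P)⁻¹ * (1 - P)) ≤ 1 := by
  have hU : IsUnit (1 + P) := by
    rw [spectrum.notMem_iff] at h
    have he1 : algebraMap ℂ (Matrix (Fin n) (Fin n) ℂ) (-1) - P = -(1 + P) := by
      simp [Algebra.algebraMap_eq_smul_one]; noncomm_ring
    rw [he1] at h
    exact (IsUnit.neg_iff _).mp h
  have hdet : IsUnit (1 + P).det := (Matrix.isUnit_iff_isUnit_det _).mp hU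
  have hinv : (1 + P)⁻¹ * (1 + P) = 1 := Matrix.nonsing_inv_mul _ hdet
  have hcomm : (1 - P) * (1 + P) = (1 + P) * (1 - P) := by noncomm_ring
  set A := (1 + P)⁻¹ * (1 - P) with hA
  have hAv : ∀ u : Fin n → ℂ, A *ᵥ ((1 + P) *ᵥ u) = (1 - P) *ᵥ u := by
    intro u
    rw [mulVec_mulVec, hA, Matrix.mul_assoc, hcomm, ← Matrix.mul_assoc, hinv,
      Matrix.one_mul]
  set e := (WithLp.equiv 2 (Fin n → ℂ)).symm with he
  constructor
  · intro hP
    show ‖toEuclideanCLM (𝕜 := ℂ) A‖ ≤ 1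
    apply ContinuousLinearMap.opNorm_le_bound _ zero_le_one
    intro v
    rw [one_mul]
    set u := (1 + P)⁻¹ *ᵥ (WithLp.equiv 2 (Fin n → ℂ) v) with hu
    have hv : (1 + P) *ᵥ u = WithLp.equiv 2 (Fin n → ℂ) v := by
      rw [hu, mulVec_mulVec, Matrix.mul_nonsing_inv _ hdet, one_mulVec]
    have hve : e ((1 + P) *ᵥ u) = v := by rw [hv]; simp [he]
    have hTv : toEuclideanCLM (𝕜 := ℂ) A v = e ((1 - P) *ᵥ u) := by
      rw [← hve, he, WithLp.equiv_symm_apply, toEuclideanCLM_toLp, hAv]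
    have key := keyid' P u
    rw [← he, hve, ← hTv] at key
    have h4 : 0 ≤ 4 * (star u ⬝ᵥ P *ᵥ u).re := by linarith [hP u]
    nlinarith [norm_nonneg (toEuclideanCLM (𝕜 := ℂ) A v), norm_nonneg v]
  · intro hle
    have hle' : ‖toEuclideanCLM (𝕜 := ℂ) A‖ ≤ 1 := hle
    intro u
    have hb := (toEuclideanCLM (𝕜 := ℂ) A).le_opNorm (e ((1 + P) *ᵥ u))
    rw [he, WithLp.equiv_symm_apply, toEuclideanCLM_toLp, hAv] at hb
    have hb2 : ‖e ((1 - P) *ᵥ u)‖ ≤ ‖e ((1 + P) *ᵥ u)‖ := by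
      calc ‖e ((1 - P) *ᵥ u)‖ ≤ ‖toEuclideanCLM (𝕜 := ℂ) A‖ * ‖e ((1 + P) *ᵥ u)‖ := hb
        _ ≤ 1 * ‖e ((1 + P) *ᵥ u)‖ := mul_le_mul_of_nonneg_right hle' (norm_nonneg _)
        _ = ‖e ((1 + P) *ᵥ u)‖ := one_mul _
    have key := keyid' P u
    rw [← he] at key
    nlinarith [norm_nonneg (e ((1 - P) *ᵥ u)), norm_nonneg (e ((1 + P) *ᵥ u))]
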